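/- Let Φ be a Young function satisfying the Δ2-condition and let (ξ_n) be a disjointly supported sequence in L_{Φ*} (ξ_n = ξ_n·1_{A_n} with (A_n) ⊂ F pairwise disjoint) with sup_n ‖ξ_n‖_{Φ*} < ∞. Then the Cesàro means ξ̄_n = (ξ_1 + ⋯ + ξ_n)/n satisfy sup_n |ξ̄_n| ∈ L_{Φ*} and ‖ξ̄_n‖_{Φ*} → 0. -/

import Mathlib

open MeasureTheory Filter Topology Set
open scoped ENNReal

noncomputable section

namespace OrliczPaper

variable {Ω : Type*} [MeasurableSpace Ω]

/-- A (finite, coercive) Young function: an even convex function with `Φ 0 = 0`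
and `Φ x / x → ∞` as `x → ∞`. -/
structure IsYoung (Φ : ℝ → ℝ) : Prop where
  even : ∀ x, Φ (-x) = Φ x
  convexOn : ConvexOn ℝ Set.univ Φ
  map_zero : Φ 0 = 0
  coercive : Tendsto (fun x => Φ x / x) atTop atTop

/-- The Δ₂-condition: `limsup_{x→∞} Φ(2x)/Φ(x) < ∞`, i.e. `Φ(2x) ≤ C Φ(x)`
for all large `x`. -/
def Delta2 (Φ : ℝ → ℝ) : Prop :=
  ∃ C x₀ : ℝ, ∀ x ≥ x₀, Φ (2 * x) ≤ C * Φ x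

/-- The conjugate Young function `Φ*(y) = sup_x (x y − Φ x)`. -/
def conj (Φ : ℝ → ℝ) (y : ℝ) : ℝ := ⨆ x : ℝ, x * y - Φ x

variable (P : Measure Ω)

/-- Membership in the Orlicz space `L_Φ`: a measurable function with
`E[Φ(l ξ)] < ∞` for some `l > 0`. -/
def MemOrlicz (Φ : ℝ → ℝ) (f : Ω → ℝ) : Prop :=
  Measurable f ∧ ∃ l : ℝ, 0 < l ∧ ∫⁻ ω, ENNReal.ofReal (Φ (l * f ω)) ∂P < ⊤

/-- The Orlicz space `L_Φ`, as a set of (everywhere defined) measurable functions. -/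
def Orlicz (Φ : ℝ → ℝ) : Set (Ω → ℝ) := {f | MemOrlicz P Φ f}

/-- The Luxemburg norm `‖f‖_Φ = inf {l > 0 : E[Φ(f/l)] ≤ 1}`. -/
def luxNorm (Φ : ℝ → ℝ) (f : Ω → ℝ) : ℝ :=
  sInf {l : ℝ | 0 < l ∧ ∫⁻ ω, ENNReal.ofReal (Φ (f ω / l)) ∂P ≤ 1}

/-- The Orlicz (dual) norm `‖f‖_{(Φ*)} = sup {E[g f] : E[Φ(g)] ≤ 1}`
(the Young function `Φ` here is the one of the *predual*). -/
def orliczNorm (Φ : ℝ → ℝ) (f : Ω → ℝ) : ℝ :=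
  sSup {r : ℝ | ∃ g : Ω → ℝ, Measurable g ∧
    (∫⁻ ω, ENNReal.ofReal (Φ (g ω)) ∂P) ≤ 1 ∧ r = ∫ ω, g ω * f ω ∂P}

/-- The bilinear pairing `⟨f, g⟩ = E[f g]`. -/
def pairing (f g : Ω → ℝ) : ℝ := ∫ ω, f ω * g ω ∂P

/-- The weak topology `σ(E, F)` on `E` induced by the pairing with `F`. -/
def weakT (E F : Set (Ω → ℝ)) : TopologicalSpace E :=
  TopologicalSpace.induced
    (fun ξ : E => fun η : F => pairing P (ξ : Ω → ℝ) (η : Ω → ℝ)) inferInstance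

/-- The absolutely convex (convex and balanced) `σ(F,E)`-compact subsets of `F`. -/
def dualSets (E F : Set (Ω → ℝ)) : Set (Set F) :=
  {A | Convex ℝ (Subtype.val '' A) ∧ Balanced ℝ (Subtype.val '' A) ∧
    @IsCompact _ (weakT P F E) A}

/-- The Mackey topology `τ(E, F)`: the topology on `E` of uniform convergence on
absolutely convex `σ(F,E)`-compact subsets of `F`. -/
def mackeyT (E F : Set (Ω → ℝ)) : TopologicalSpace E :=
  TopologicalSpace.induced
    (fun ξ : E => UniformOnFun.ofFun (dualSets P E F)
      (fun η : F => pairing P (ξ : Ω → ℝ) (η : Ω → ℝ)))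
    inferInstance

/-- A distance generating the topology of convergence in `P`-probability. -/
def probDist (f g : Ω → ℝ) : ℝ := ∫ ω, min |f ω - g ω| 1 ∂P

/-- The topology of convergence in probability, restricted to `E ⊆ L₀`. -/
def probT (E : Set (Ω → ℝ)) : TopologicalSpace E :=
  TopologicalSpace.generateFrom
    {U | ∃ f : E, ∃ ε : ℝ, 0 < ε ∧ U = {g : E | probDist P (f : Ω → ℝ) (g : Ω → ℝ) < ε}}

/-- `L_∞`: essentially bounded measurable functions. -/
def Linf : Set (Ω → ℝ) := {f | Measurable f ∧ ∃ C : ℝ, ∀ᵐ ω ∂P, |f ω| ≤ C}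

/-- `L_1`: integrable measurable functions. -/
def L1 : Set (Ω → ℝ) := {f | Measurable f ∧ Integrable f P}

/-- The essential supremum norm. -/
def linfNorm (f : Ω → ℝ) : ℝ := sInf {C : ℝ | 0 ≤ C ∧ ∀ᵐ ω ∂P, |f ω| ≤ C}

/-- Uniform integrability of a set of functions:
`sup_{f ∈ A} E[|f| 1_{|f| > N}] → 0`. -/
def UnifInt (A : Set (Ω → ℝ)) : Prop :=
  Tendsto (fun N : ℕ => ⨆ f ∈ A, ∫⁻ ω in {ω | (N : ℝ) < |f ω|}, ENNReal.ofReal |f ω| ∂P)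
    atTop (𝓝 0)

/-- Uniform integrability of a sequence of functions. -/
def UnifIntSeq (g : ℕ → Ω → ℝ) : Prop :=
  Tendsto (fun N : ℕ => ⨆ n, ∫⁻ ω in {ω | (N : ℝ) < |g n ω|}, ENNReal.ofReal |g n ω| ∂P)
    atTop (𝓝 0)

/-- The Cesàro means of a sequence of functions: `cesaro ξ N` is the average of
`ξ 0, …, ξ N`. -/
def cesaro (ξ : ℕ → Ω → ℝ) (N : ℕ) : Ω → ℝ :=
  fun ω => (∑ i ∈ Finset.range (N + 1), ξ i ω) / (N + 1)

/-- `sup_n |ξ n| ∈ L_Φ` (order boundedness of the sequence `ξ` in `L_Φ`). -/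
def supMem (Φ : ℝ → ℝ) (ξ : ℕ → Ω → ℝ) : Prop :=
  (∀ᵐ ω ∂P, BddAbove (Set.range fun n => |ξ n ω|)) ∧
    MemOrlicz P Φ (fun ω => ⨆ n, |ξ n ω|)

/-- `ξb` is a sequence of forward convex combinations of `ξ`:
`ξb n ∈ conv (ξ k ; k ≥ n)`. -/
def FwdConvComb (ξ ξb : ℕ → Ω → ℝ) : Prop :=
  ∀ n, ξb n ∈ convexHull ℝ {g : Ω → ℝ | ∃ k ≥ n, g = ξ k}

/-- The left derivative of a convex function. -/
def leftDeriv (Φ : ℝ → ℝ) (y : ℝ) : ℝ :=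
  ⨆ h : {h : ℝ // 0 < h}, (Φ y - Φ (y - (h : ℝ))) / (h : ℝ)

/-- `p_Φ(x) = sup_{y > x} y Φ'(y) / Φ(y)`. -/
def pPhiAt (Φ : ℝ → ℝ) (x : ℝ) : ℝ≥0∞ :=
  ⨆ y : {y : ℝ // x < y}, ENNReal.ofReal ((y : ℝ) * leftDeriv Φ (y : ℝ) / Φ (y : ℝ))

/-- `p_Φ = inf_{x ≥ 0} p_Φ(x)`. -/
def pPhi (Φ : ℝ → ℝ) : ℝ≥0∞ := ⨅ x : {x : ℝ // 0 ≤ x}, pPhiAt Φ x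

/-- `q_Φ = p_Φ / (p_Φ − 1)` (with `1/0 = ∞`). -/
def qPhi (Φ : ℝ → ℝ) : ℝ≥0∞ := pPhi Φ / (pPhi Φ - 1)

end OrliczPaper

namespace OrliczPaper

variable {Φ : ℝ → ℝ}

lemma IsYoung.nonneg (hΦ : IsYoung Φ) (x : ℝ) : 0 ≤ Φ x := by
  have h := hΦ.convexOn.2 (mem_univ x) (mem_univ (-x))
    (by norm_num : (0:ℝ) ≤ 1/2) (by norm_num : (0:ℝ) ≤ 1/2) (by norm_num)
  simp only [smul_eq_mul] at h
  have hx : (1/2 : ℝ) * x + (1/2 : ℝ) * (-x) = 0 := by ring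
  rw [hx, hΦ.map_zero, hΦ.even] at h
  linarith

lemma IsYoung.abs_eq (hΦ : IsYoung Φ) (x : ℝ) : Φ |x| = Φ x := by
  rcases abs_cases x with ⟨h, _⟩ | ⟨h, _⟩
  · rw [h]
  · rw [h, hΦ.even]

lemma IsYoung.mono (hΦ : IsYoung Φ) {x y : ℝ} (hx : 0 ≤ x) (hxy : x ≤ y) : Φ x ≤ Φ y := by
  rcases eq_or_lt_of_le (hx.trans hxy) with h | hy
  · have hx0 : x = 0 := le_antisymm (hxy.trans h.symm.le) hx
    rw [hx0, ← h, hΦ.map_zero]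
  · set t : ℝ := (y - x) / (2 * y) with ht
    have h2y : (0:ℝ) < 2 * y := by linarith
    have ht0 : 0 ≤ t := div_nonneg (by linarith) h2y.le
    have ht1 : t ≤ 1 := by
      rw [ht, div_le_one h2y]; linarith
    have h := hΦ.convexOn.2 (mem_univ (-y)) (mem_univ y) ht0 (by linarith : 0 ≤ 1 - t) (by ring)
    simp only [smul_eq_mul] at h
    have harg : t * (-y) + (1 - t) * y = x := by
      have e : t * (2 * y) = y - x := by rw [ht]; exact div_mul_cancel₀ _ (ne_of_gt h2y)
      linear_combination -e
    rw [harg, hΦ.even] at h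
    nlinarith [hΦ.nonneg y]

lemma IsYoung.bddAbove (hΦ : IsYoung Φ) (y : ℝ) :
    BddAbove (Set.range fun x => x * y - Φ x) := by
  obtain ⟨R, hR⟩ := (hΦ.coercive.eventually_ge_atTop (|y| + 1)).exists_forall_of_atTop
  refine ⟨max 1 R * |y|, ?_⟩
  rintro v ⟨x, rfl⟩
  show x * y - Φ x ≤ max 1 R * |y|
  have h3 : x * y ≤ |x| * |y| := (le_abs_self _).trans (abs_mul x y).le
  rcases le_or_gt |x| (max 1 R) with h | h
  · have h1 : |x| * |y| ≤ max 1 R * |y| := mul_le_mul_of_nonneg_right h (abs_nonneg y)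
    nlinarith [hΦ.nonneg x]
  · have hx1 : (1:ℝ) ≤ |x| := le_of_lt (lt_of_le_of_lt (le_max_left 1 R) h)
    have hR2 : (|y| + 1) ≤ Φ |x| / |x| := hR |x| (le_of_lt (lt_of_le_of_lt (le_max_right 1 R) h))
    have hxpos : (0:ℝ) < |x| := by linarith
    have h2 : (|y| + 1) * |x| ≤ Φ |x| := (le_div_iff₀ hxpos).mp hR2
    rw [hΦ.abs_eq] at h2
    nlinarith [mul_nonneg (abs_nonneg x) (abs_nonneg y), mul_nonneg (abs_nonneg y) (le_trans zero_le_one (le_max_left 1 R))]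

lemma conj_ge (hΦ : IsYoung Φ) (x y : ℝ) : x * y - Φ x ≤ conj Φ y :=
  le_ciSup (hΦ.bddAbove y) x

lemma conj_nonneg (hΦ : IsYoung Φ) (y : ℝ) : 0 ≤ conj Φ y := by
  have := conj_ge hΦ 0 y
  rw [zero_mul, hΦ.map_zero, sub_zero] at this
  exact this

lemma conj_zero (hΦ : IsYoung Φ) : conj Φ 0 = 0 := by
  refine le_antisymm (ciSup_le fun x => ?_) (conj_nonneg hΦ 0)
  rw [mul_zero, zero_sub]
  simpa using hΦ.nonneg x

lemma conj_even (hΦ : IsYoung Φ) (y : ℝ) : conj Φ (-y) = conj Φ y := by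
  have hr : (Set.range fun x => x * (-y) - Φ x) = Set.range fun x => x * y - Φ x := by
    ext v
    constructor
    · rintro ⟨u, rfl⟩
      exact ⟨-u, by simp only []; rw [hΦ.even]; ring⟩
    · rintro ⟨u, rfl⟩
      exact ⟨-u, by simp only []; rw [hΦ.even]; ring⟩
  rw [conj, conj, iSup, iSup, hr]

lemma conj_abs_eq (hΦ : IsYoung Φ) (y : ℝ) : conj Φ |y| = conj Φ y := by
  rcases abs_cases y with ⟨h, _⟩ | ⟨h, _⟩
  · rw [h]
  · rw [h, conj_even hΦ]

lemma conj_mono (hΦ : IsYoung Φ) {y₁ y₂ : ℝ} (h1 : 0 ≤ y₁) (h12 : y₁ ≤ y₂) :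
    conj Φ y₁ ≤ conj Φ y₂ := by
  refine ciSup_le fun x => ?_
  have h1' : x * y₁ - Φ x ≤ |x| * y₁ - Φ |x| := by
    rw [hΦ.abs_eq]
    have : x * y₁ ≤ |x| * y₁ := mul_le_mul_of_nonneg_right (le_abs_self x) h1
    linarith
  refine h1'.trans (le_trans ?_ (conj_ge hΦ |x| y₂))
  have : |x| * y₁ ≤ |x| * y₂ := mul_le_mul_of_nonneg_left h12 (abs_nonneg x)
  linarith

lemma conj_mono_abs (hΦ : IsYoung Φ) {v w : ℝ} (h : |v| ≤ |w|) : conj Φ v ≤ conj Φ w := by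
  rw [← conj_abs_eq hΦ v, ← conj_abs_eq hΦ w]
  exact conj_mono hΦ (abs_nonneg v) h

lemma conj_smul_le (hΦ : IsYoung Φ) {t : ℝ} (ht0 : 0 ≤ t) (ht1 : t ≤ 1) (y : ℝ) :
    conj Φ (t * y) ≤ t * conj Φ y := by
  refine ciSup_le fun x => ?_
  have h1 : x * (t * y) - Φ x ≤ t * (x * y - Φ x) := by
    have : t * Φ x ≤ Φ x := by nlinarith [hΦ.nonneg x]
    nlinarith
  exact h1.trans (mul_le_mul_of_nonneg_left (conj_ge hΦ x y) ht0)

lemma conj_comp_measurable (hΦ : IsYoung Φ) {α : Type*} [MeasurableSpace α] {f : α → ℝ}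
    (hf : Measurable f) : Measurable fun ω => conj Φ (f ω) := by
  have hψ : Monotone fun y : ℝ => conj Φ (max y 0) := by
    intro u v huv
    exact conj_mono hΦ (le_max_right u 0) (max_le_max huv le_rfl)
  have : (fun ω => conj Φ (f ω)) = (fun y : ℝ => conj Φ (max y 0)) ∘ fun ω => |f ω| := by
    ext ω
    simp only [Function.comp_apply, max_eq_left (abs_nonneg (f ω)), conj_abs_eq hΦ]
  rw [this]
  exact hψ.measurable.comp hf.abs

lemma nabla2 (hΦ : IsYoung Φ) (hΔ : Delta2 Φ) :
    ∃ (b : ℕ) (D y₀ : ℝ), 2 ≤ b ∧ (b : ℝ) < D ∧ 0 ≤ y₀ ∧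
      ∀ y, y₀ ≤ y → conj Φ y ≤ conj Φ ((b : ℝ) * y) / D := by
  obtain ⟨C, x₀, hC⟩ := hΔ
  set x₁ : ℝ := max x₀ 1 with hx₁def
  have hx₁1 : (1:ℝ) ≤ x₁ := le_max_right _ _
  have hx₁0 : (0:ℝ) < x₁ := lt_of_lt_of_le one_pos hx₁1
  set C' : ℝ := max C 4 with hC'def
  have hC'4 : (4:ℝ) ≤ C' := le_max_right _ _
  set a : ℝ := C' / 2 with hadef
  have ha2 : (2:ℝ) ≤ a := by rw [hadef]; linarith
  have hC2 : ∀ x, x₁ ≤ x → Φ (2 * x) ≤ C' * Φ x := by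
    intro x hx
    refine (hC x (le_trans (le_max_left _ _) hx)).trans ?_
    exact mul_le_mul_of_nonneg_right (le_max_left C 4) (hΦ.nonneg x)
  set b : ℕ := ⌈a⌉₊ with hbdef
  have hab : a ≤ (b : ℝ) := Nat.le_ceil a
  have hb2 : 2 ≤ b := by
    have : (2:ℝ) ≤ (b:ℝ) := le_trans ha2 hab
    exact_mod_cast this
  have hbD : (b : ℝ) < 2 * a := by
    have : (b : ℝ) < a + 1 := Nat.ceil_lt_add_one (by linarith)
    linarith
  set y₀ : ℝ := max (Φ (2 * x₁) / x₁) 1 with hy₀def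
  refine ⟨b, 2 * a, y₀, hb2, hbD, by positivity, fun y hy => ?_⟩
  have hy1 : (1:ℝ) ≤ y := le_trans (le_max_right _ _) hy
  have hy0 : (0:ℝ) < y := lt_of_lt_of_le one_pos hy1
  have ha0 : (0:ℝ) < 2 * a := by linarith
  have hA : ∀ x, x₁ ≤ x → x * y - Φ x ≤ conj Φ (a * y) / (2 * a) := by
    intro x hx
    rw [le_div_iff₀ ha0]
    have h1 : (2 * x) * (a * y) - Φ (2 * x) ≤ conj Φ (a * y) := conj_ge hΦ _ _
    have h2 : Φ (2 * x) ≤ C' * Φ x := hC2 x hx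
    have hCa : C' = 2 * a := by rw [hadef]; ring
    rw [hCa] at h2
    have e : (x * y - Φ x) * (2 * a) = 2 * x * (a * y) - 2 * a * Φ x := by ring
    rw [e]; linarith
  have hstep : conj Φ (a * y) / (2 * a) ≤ conj Φ ((b : ℝ) * y) / (2 * a) := by
    have hm : conj Φ (a * y) ≤ conj Φ ((b : ℝ) * y) :=
      conj_mono hΦ (by positivity) (mul_le_mul_of_nonneg_right hab hy0.le)
    rw [div_le_div_iff_of_pos_right ha0]
    exact hm
  refine ciSup_le fun x => ?_
  rcases le_or_gt x₁ x with hx | hx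
  · exact (hA x hx).trans hstep
  · have hxy : x * y ≤ x₁ * y := mul_le_mul_of_nonneg_right hx.le hy0.le
    have hΦ2 : Φ (2 * x₁) ≤ x₁ * y := by
      have h4 : Φ (2 * x₁) / x₁ ≤ y := le_trans (le_max_left _ _) hy
      have h5 := (div_le_iff₀ hx₁0).mp h4
      linarith
    have h3 : x * y - Φ x ≤ (2 * x₁) * y - Φ (2 * x₁) := by
      nlinarith [hΦ.nonneg x]
    exact h3.trans ((hA (2 * x₁) (by linarith)).trans hstep)

lemma nabla2_pow (hΦ : IsYoung Φ) {b D y₀ : ℝ} (hb : 1 ≤ b) (hD : 0 < D) (hy₀ : 0 ≤ y₀)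
    (H : ∀ y, y₀ ≤ y → conj Φ y ≤ conj Φ (b * y) / D) :
    ∀ (k : ℕ) (y : ℝ), y₀ ≤ y → conj Φ y ≤ conj Φ (b ^ k * y) / D ^ k := by
  intro k
  induction k with
  | zero => intro y _; simp
  | succ k ih =>
    intro y hy
    have hy0 : 0 ≤ y := le_trans hy₀ hy
    have hby : y₀ ≤ b * y := le_trans hy (le_mul_of_one_le_left hy0 hb)
    have h1 := H y hy
    have h2 := ih (b * y) hby
    have h3 : conj Φ (b * y) / D ≤ conj Φ (b ^ k * (b * y)) / D ^ k / D := by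
      rw [div_le_div_iff_of_pos_right hD]
      exact h2
    refine h1.trans (h3.trans (le_of_eq ?_))
    rw [div_div, ← pow_succ]
    ring_nf

lemma conj_key (hΦ : IsYoung Φ) {b D y₀ : ℝ} (hb : 1 ≤ b) (hD : 0 < D) (hy₀ : 0 ≤ y₀)
    (H : ∀ y, y₀ ≤ y → conj Φ y ≤ conj Φ (b * y) / D) (k : ℕ) (v lam d : ℝ)
    (hlam : 0 < lam) (hd : lam * b ^ k ≤ d) :
    conj Φ (v / d) ≤ conj Φ (v / lam) / D ^ k + conj Φ y₀ := by
  have hbk : (0:ℝ) < b ^ k := pow_pos (lt_of_lt_of_le one_pos hb) k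
  have hlbk : (0:ℝ) < lam * b ^ k := mul_pos hlam hbk
  have hd0 : (0:ℝ) < d := lt_of_lt_of_le hlbk hd
  have habs : conj Φ (v / d) = conj Φ (|v| / d) := by
    rw [← conj_abs_eq hΦ (v / d), abs_div, abs_of_pos hd0]
  have step1 : conj Φ (|v| / d) ≤ conj Φ (|v| / (lam * b ^ k)) :=
    conj_mono hΦ (by positivity) (div_le_div_of_nonneg_left (abs_nonneg v) hlbk hd)
  rw [habs]
  rcases le_or_gt y₀ (|v| / (lam * b ^ k)) with hcase | hcase
  · have h2 := nabla2_pow hΦ hb hD hy₀ H k _ hcase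
    have harg : b ^ k * (|v| / (lam * b ^ k)) = |v| / lam := by
      field_simp
    rw [harg] at h2
    have h3 : conj Φ (|v| / lam) = conj Φ (v / lam) := by
      rw [← conj_abs_eq hΦ (v / lam), abs_div, abs_of_pos hlam]
    rw [h3] at h2
    linarith [step1, conj_nonneg hΦ y₀]
  · have h2 : conj Φ (|v| / (lam * b ^ k)) ≤ conj Φ y₀ :=
      conj_mono hΦ (by positivity) hcase.le
    have h4 : 0 ≤ conj Φ (v / lam) / D ^ k := by
      have := conj_nonneg hΦ (v / lam)
      positivity
    linarith [step1]

lemma summable_logpow {b : ℕ} (hb : 2 ≤ b) {D : ℝ} (hD : (b : ℝ) < D) :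
    Summable fun n : ℕ => (1 / D) ^ Nat.log b (n + 1) := by
  have hb1 : (1:ℝ) < (b:ℝ) := by exact_mod_cast lt_of_lt_of_le one_lt_two (by exact_mod_cast hb)
  have hb0 : (0:ℝ) < (b:ℝ) := lt_trans one_pos hb1
  have hD1 : (1:ℝ) < D := lt_trans hb1 hD
  have hD0 : (0:ℝ) < D := lt_trans one_pos hD1
  set t : ℝ := Real.logb b D with htdef
  have ht1 : 1 < t := by
    rw [htdef, ← Real.logb_self_eq_one hb1]
    exact Real.logb_lt_logb hb1 hb0 hD
  have ht0 : 0 ≤ t := by linarith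
  have hbt : (b:ℝ) ^ t = D := Real.rpow_logb hb0 (ne_of_gt hb1) hD0
  have key : ∀ n : ℕ, (1 / D) ^ Nat.log b (n + 1) ≤ (b:ℝ) ^ t * ((n:ℝ) + 1) ^ (-t) := by
    intro n
    set L : ℕ := Nat.log b (n + 1) with hLdef
    have hn1 : (n:ℝ) + 1 < (b:ℝ) ^ (L + 1) := by
      have := Nat.lt_pow_succ_log_self (by exact_mod_cast hb : 1 < b) (n + 1)
      exact_mod_cast this
    have hbL : ((n:ℝ) + 1) / (b:ℝ) ≤ (b:ℝ) ^ L := by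
      rw [div_le_iff₀ hb0]
      rw [pow_succ] at hn1
      linarith
    have hnb0 : (0:ℝ) < ((n:ℝ) + 1) / (b:ℝ) := by positivity
    have h1 : (((n:ℝ) + 1) / (b:ℝ)) ^ t ≤ ((b:ℝ) ^ L) ^ t :=
      Real.rpow_le_rpow hnb0.le hbL ht0
    have h2 : ((b:ℝ) ^ L : ℝ) ^ t = D ^ L := by
      rw [← Real.rpow_natCast (b:ℝ) L, ← Real.rpow_mul hb0.le, mul_comm,
        Real.rpow_mul hb0.le, hbt, Real.rpow_natCast]
    have h3 : (((n:ℝ) + 1) / (b:ℝ)) ^ t ≤ D ^ L := h2 ▸ h1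
    have h4 : ((1:ℝ) / D) ^ L = (D ^ L)⁻¹ := by rw [one_div, inv_pow]
    rw [h4]
    have h5 : (D ^ L)⁻¹ ≤ ((((n:ℝ) + 1) / (b:ℝ)) ^ t)⁻¹ :=
      inv_anti₀ (Real.rpow_pos_of_pos hnb0 t) h3
    refine h5.trans (le_of_eq ?_)
    rw [Real.div_rpow (by positivity) hb0.le, inv_div, Real.rpow_neg (by positivity),
      div_eq_mul_inv]
  have hs : Summable fun n : ℕ => ((n:ℝ) + 1) ^ (-t) := by
    have h0 : Summable fun n : ℕ => (n:ℝ) ^ (-t) :=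
      Real.summable_nat_rpow.mpr (by linarith)
    have h := (summable_nat_add_iff 1).mpr h0
    simpa using h
  exact Summable.of_nonneg_of_le (fun n => by positivity) key (hs.mul_left _)

lemma conj_abs_div (hΦ : IsYoung Φ) (v : ℝ) {d : ℝ} (hd : 0 < d) :
    conj Φ (|v| / d) = conj Φ (v / d) := by
  rw [← conj_abs_eq hΦ (v / d), abs_div, abs_of_pos hd]

/-- If `Φ ∈ Δ₂` and `(ξ_n)` is a norm-bounded disjointly
supported sequence in `L_{Φ*}`, then `sup_n |ξ̄_n| ∈ L_{Φ*}` and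
`‖ξ̄_n‖_{Φ*} → 0`, where `ξ̄_n` are the Cesàro means. -/
theorem statement6
    {Ω : Type*} [MeasurableSpace Ω] (P : Measure Ω) [IsProbabilityMeasure P]
    (Φ : ℝ → ℝ) (hΦ : IsYoung Φ) (hΔ : Delta2 Φ)
    (ξ : ℕ → Ω → ℝ) (A : ℕ → Set Ω)
    (hAmeas : ∀ n, MeasurableSet (A n)) (hdisj : Pairwise (Function.onFun Disjoint A))
    (hsupp : ∀ n, ∀ᵐ ω ∂P, ω ∉ A n → ξ n ω = 0)
    (hmem : ∀ n, MemOrlicz P (conj Φ) (ξ n))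
    (hbdd : ∃ M : ℝ, ∀ n, luxNorm P (conj Φ) (ξ n) ≤ M) :
    supMem P (conj Φ) (cesaro ξ) ∧
      Tendsto (fun N => luxNorm P (conj Φ) (cesaro ξ N)) atTop (𝓝 0) := by
  classical
  obtain ⟨b, D, y₀, hb2, hbD, hy₀, Hnab⟩ := nabla2 hΦ hΔ
  have hbR1 : (1:ℝ) < (b:ℝ) := by exact_mod_cast lt_of_lt_of_le one_lt_two (by exact_mod_cast hb2)
  have hbR0 : (0:ℝ) < (b:ℝ) := lt_trans one_pos hbR1
  have hD0 : (0:ℝ) < D := lt_trans hbR0 hbD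
  have hD1 : (1:ℝ) < D := lt_trans hbR1 hbD
  set K : ℝ := conj Φ y₀ with hKdef
  have hK0 : 0 ≤ K := conj_nonneg hΦ y₀
  obtain ⟨M, hM⟩ := hbdd
  set lam : ℝ := max M 0 + 1 with hlamdef
  have hlam0 : (0:ℝ) < lam := by positivity
  have hmeas : ∀ n, Measurable (ξ n) := fun n => (hmem n).1
  have hcmeas : ∀ N, Measurable (cesaro ξ N) := by
    intro N
    exact (Finset.measurable_sum _ fun i _ => hmeas i).div_const _
  have hE : ∀ᵐ ω ∂P, ∀ n, ω ∉ A n → ξ n ω = 0 := ae_all_iff.mpr hsupp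
  -- norm bound at scale lam
  have hnorm : ∀ n, ∫⁻ ω, ENNReal.ofReal (conj Φ (ξ n ω / lam)) ∂P ≤ 1 := by
    intro n
    have hSne : {l : ℝ | 0 < l ∧ ∫⁻ ω, ENNReal.ofReal (conj Φ (ξ n ω / l)) ∂P ≤ 1}.Nonempty := by
      obtain ⟨-, l, hl0, hlint⟩ := hmem n
      set I : ℝ≥0∞ := ∫⁻ ω, ENNReal.ofReal (conj Φ (l * ξ n ω)) ∂P with hIdef
      set c : ℝ := I.toReal + 1 with hcdef
      have hc1 : (1:ℝ) ≤ c := by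
        have := ENNReal.toReal_nonneg (a := I); rw [hcdef]; linarith
      have hc0 : (0:ℝ) < c := lt_of_lt_of_le one_pos hc1
      refine ⟨c / l, ⟨div_pos hc0 hl0, ?_⟩⟩
      have hptw : ∀ ω, conj Φ (ξ n ω / (c / l)) ≤ (1 / c) * conj Φ (l * ξ n ω) := by
        intro ω
        have harg : ξ n ω / (c / l) = (1 / c) * (l * ξ n ω) := by
          field_simp
        rw [harg]
        exact conj_smul_le hΦ (by positivity) (by rw [div_le_one hc0]; exact hc1) _
      calc ∫⁻ ω, ENNReal.ofReal (conj Φ (ξ n ω / (c / l))) ∂P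
          ≤ ∫⁻ ω, ENNReal.ofReal (1 / c) * ENNReal.ofReal (conj Φ (l * ξ n ω)) ∂P := by
            refine lintegral_mono fun ω => ?_
            rw [← ENNReal.ofReal_mul (by positivity)]
            exact ENNReal.ofReal_le_ofReal (hptw ω)
        _ = ENNReal.ofReal (1 / c) * I := lintegral_const_mul' _ _ ENNReal.ofReal_ne_top
        _ ≤ ENNReal.ofReal (1 / c) * ENNReal.ofReal c := by
            refine mul_le_mul_right ?_ _
            rw [← ENNReal.ofReal_toReal hlint.ne]
            exact ENNReal.ofReal_le_ofReal (by rw [hcdef]; linarith)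
        _ = ENNReal.ofReal 1 := by
            rw [← ENNReal.ofReal_mul (by positivity), one_div, inv_mul_cancel₀ (ne_of_gt hc0)]
        _ = 1 := ENNReal.ofReal_one
    have hlt : sInf {l : ℝ | 0 < l ∧ ∫⁻ ω, ENNReal.ofReal (conj Φ (ξ n ω / l)) ∂P ≤ 1} < lam := by
      refine lt_of_le_of_lt (hM n) ?_
      rw [hlamdef]
      have : M ≤ max M 0 := le_max_left _ _
      linarith
    obtain ⟨l, ⟨hl0, hlle⟩, hllam⟩ := exists_lt_of_csInf_lt hSne hlt
    refine le_trans (lintegral_mono fun ω => ?_) hlle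
    refine ENNReal.ofReal_le_ofReal (conj_mono_abs hΦ ?_)
    rw [abs_div, abs_div, abs_of_pos hlam0, abs_of_pos hl0]
    exact div_le_div_of_nonneg_left (abs_nonneg _) hl0 hllam.le
  -- the dominating functions
  set cc : ℕ → ℕ → ℝ := fun m₀ n => max ((n:ℝ) + 1) ((b:ℝ) ^ m₀) with hccdef
  have hcc0 : ∀ m₀ n, (0:ℝ) < cc m₀ n := fun m₀ n =>
    lt_of_lt_of_le (by positivity) (le_max_left _ _)
  set g : ℕ → Ω → ℝ := fun m₀ ω => (∑' n, ENNReal.ofReal (|ξ n ω| / cc m₀ n)).toReal with hgdef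
  have hgmeas : ∀ m₀, Measurable (g m₀) := by
    intro m₀
    exact (Measurable.ennreal_tsum fun n =>
      ((hmeas n).abs.div_const _).ennreal_ofReal).ennreal_toReal
  have hg0 : ∀ m₀ ω, 0 ≤ g m₀ ω := fun m₀ ω => ENNReal.toReal_nonneg
  -- values of g on the good set
  have hnotin : ∀ {ω n m}, ω ∈ A n → m ≠ n → ω ∉ A m := by
    intro ω n m hn hmn
    exact fun hm => Set.disjoint_left.mp (hdisj hmn) hm hn
  have hgval : ∀ ω, (∀ m, ω ∉ A m → ξ m ω = 0) → ∀ n, ω ∈ A n →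
      ∀ m₀, g m₀ ω = |ξ n ω| / cc m₀ n := by
    intro ω hgood n hn m₀
    rw [hgdef]
    simp only []
    rw [tsum_eq_single n ?_]
    · exact ENNReal.toReal_ofReal (by positivity)
    · intro m hmn
      rw [hgood m (hnotin hn hmn), abs_zero, zero_div, ENNReal.ofReal_zero]
  have hgval0 : ∀ ω, (∀ m, ω ∉ A m → ξ m ω = 0) → ω ∉ ⋃ m, A m → ∀ m₀, g m₀ ω = 0 := by
    intro ω hgood hω m₀
    rw [hgdef]
    simp only []
    have : ∀ m, ENNReal.ofReal (|ξ m ω| / cc m₀ m) = 0 := by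
      intro m
      rw [hgood m (fun hm => hω (Set.mem_iUnion.2 ⟨m, hm⟩)), abs_zero, zero_div,
        ENNReal.ofReal_zero]
    simp [this]
  -- values of cesaro on the good set
  have hces : ∀ ω, (∀ m, ω ∉ A m → ξ m ω = 0) → ∀ n, ω ∈ A n → ∀ N,
      cesaro ξ N ω = if n ≤ N then ξ n ω / ((N:ℝ) + 1) else 0 := by
    intro ω hgood n hn N
    rw [cesaro]
    by_cases h : n ≤ N
    · rw [if_pos h, Finset.sum_eq_single_of_mem n (Finset.mem_range.2 (by omega))
        (fun m _ hmn => hgood m (hnotin hn hmn))]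
    · rw [if_neg h, Finset.sum_eq_zero (fun m hm => hgood m
        (hnotin hn (by simp at hm; omega))), zero_div]
  have hces0 : ∀ ω, (∀ m, ω ∉ A m → ξ m ω = 0) → ω ∉ ⋃ m, A m → ∀ N,
      cesaro ξ N ω = 0 := by
    intro ω hgood hω N
    rw [cesaro, Finset.sum_eq_zero (fun m _ => hgood m
      (fun hm => hω (Set.mem_iUnion.2 ⟨m, hm⟩))), zero_div]
  -- domination
  have hdom : ∀ ω, (∀ m, ω ∉ A m → ξ m ω = 0) → ∀ (m₀ N : ℕ), (b:ℝ) ^ m₀ ≤ (N:ℝ) + 1 →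
      |cesaro ξ N ω| ≤ g m₀ ω := by
    intro ω hgood m₀ N hN
    by_cases h : ∃ n, ω ∈ A n
    · obtain ⟨n, hn⟩ := h
      rw [hces ω hgood n hn N, hgval ω hgood n hn m₀]
      by_cases hnN : n ≤ N
      · rw [if_pos hnN, abs_div, abs_of_pos (by positivity : (0:ℝ) < (N:ℝ) + 1)]
        refine div_le_div_of_nonneg_left (abs_nonneg _) (hcc0 m₀ n) ?_
        rw [hccdef]
        simp only [max_le_iff]
        constructor
        · have : (n:ℝ) ≤ (N:ℝ) := by exact_mod_cast hnN
          linarith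
        · exact hN
      · rw [if_neg hnN, abs_zero]
        positivity
    · push_neg at h
      rw [hces0 ω hgood (fun hω => (Set.mem_iUnion.1 hω).elim fun m hm => h m hm) N, abs_zero]
      exact hg0 m₀ ω
  -- the key integral estimate
  have hgint : ∀ (m₀ : ℕ) (ε : ℝ), 0 < ε → lam ≤ ε * (b:ℝ) ^ m₀ →
      ∫⁻ ω, ENNReal.ofReal (conj Φ (g m₀ ω / ε)) ∂P < ⊤ := by
    intro m₀ ε hε hεm
    set U : Set Ω := ⋃ n, A n with hUdef
    have hUmeas : MeasurableSet U := MeasurableSet.iUnion hAmeas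
    set f : Ω → ℝ≥0∞ := fun ω => ENNReal.ofReal (conj Φ (g m₀ ω / ε)) with hfdef
    have hsplit : ∫⁻ ω, f ω ∂P = (∫⁻ ω in U, f ω ∂P) + ∫⁻ ω in Uᶜ, f ω ∂P :=
      (lintegral_add_compl f hUmeas).symm
    have hcompl : ∫⁻ ω in Uᶜ, f ω ∂P = 0 := by
      have hae : ∀ᵐ ω ∂(P.restrict Uᶜ), f ω = 0 := by
        refine (ae_restrict_iff' hUmeas.compl).mpr (hE.mono fun ω hgood hω => ?_)
        rw [hfdef]; simp only []
        rw [hgval0 ω hgood hω m₀, zero_div, conj_zero hΦ, ENNReal.ofReal_zero]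
      rw [lintegral_congr_ae hae, lintegral_zero]
    set k : ℕ → ℕ := fun n => Nat.log b (n + 1) - m₀ with hkdef
    have hdle : ∀ n, lam * (b:ℝ) ^ (k n) ≤ ε * cc m₀ n := by
      intro n
      rcases le_or_gt m₀ (Nat.log b (n + 1)) with hc | hc
      · have h1 : (b:ℝ) ^ (k n) * (b:ℝ) ^ m₀ = (b:ℝ) ^ (Nat.log b (n+1)) := by
          rw [← pow_add]
          congr 1
          rw [hkdef]; simp only []; omega
        have h2 : (b:ℝ) ^ (Nat.log b (n+1)) ≤ (n:ℝ) + 1 := by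
          have := Nat.pow_log_le_self b (show n + 1 ≠ 0 by omega)
          exact_mod_cast this
        have h3 : (n:ℝ)+1 ≤ cc m₀ n := le_max_left _ _
        calc lam * (b:ℝ)^(k n) ≤ (ε * (b:ℝ)^m₀) * (b:ℝ)^(k n) :=
              mul_le_mul_of_nonneg_right hεm (by positivity)
          _ = ε * ((b:ℝ)^(k n) * (b:ℝ)^m₀) := by ring
          _ ≤ ε * cc m₀ n := by
              refine mul_le_mul_of_nonneg_left ?_ hε.le
              rw [h1]; exact h2.trans h3
      · have hk0 : k n = 0 := by rw [hkdef]; simp only []; omega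
        rw [hk0, pow_zero, mul_one]
        exact hεm.trans (mul_le_mul_of_nonneg_left (le_max_right _ _) hε.le)
    have hpiece : ∀ n, ∫⁻ ω in A n, f ω ∂P ≤
        ENNReal.ofReal ((1/D) ^ (k n)) + ENNReal.ofReal K * P (A n) := by
      intro n
      have hptw : ∀ᵐ ω ∂(P.restrict (A n)),
          f ω ≤ ENNReal.ofReal ((1/D) ^ (k n)) * ENNReal.ofReal (conj Φ (ξ n ω / lam))
            + ENNReal.ofReal K := by
        refine (ae_restrict_iff' (hAmeas n)).mpr (hE.mono fun ω hgood hω => ?_)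
        have hval : g m₀ ω / ε = |ξ n ω| / (ε * cc m₀ n) := by
          rw [hgval ω hgood n hω m₀, div_div, mul_comm]
        have hkey : conj Φ (g m₀ ω / ε) ≤ conj Φ (ξ n ω / lam) / D ^ (k n) + K := by
          rw [hval, conj_abs_div hΦ _ (by positivity)]
          exact conj_key hΦ hbR1.le hD0 hy₀ Hnab (k n) (ξ n ω) lam _ hlam0 (hdle n)
        rw [hfdef]; simp only []
        calc ENNReal.ofReal (conj Φ (g m₀ ω / ε))
            ≤ ENNReal.ofReal (conj Φ (ξ n ω / lam) / D ^ (k n) + K) :=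
              ENNReal.ofReal_le_ofReal hkey
          _ ≤ ENNReal.ofReal (conj Φ (ξ n ω / lam) / D ^ (k n)) + ENNReal.ofReal K :=
              ENNReal.ofReal_add_le
          _ = ENNReal.ofReal ((1/D)^(k n) * conj Φ (ξ n ω / lam)) + ENNReal.ofReal K := by
              congr 2
              rw [div_eq_mul_inv, mul_comm, one_div, inv_pow]
          _ = ENNReal.ofReal ((1/D)^(k n)) * ENNReal.ofReal (conj Φ (ξ n ω / lam))
              + ENNReal.ofReal K := by
              rw [ENNReal.ofReal_mul (by positivity)]
      calc ∫⁻ ω in A n, f ω ∂P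
          ≤ ∫⁻ ω in A n, (ENNReal.ofReal ((1/D)^(k n)) * ENNReal.ofReal (conj Φ (ξ n ω / lam))
              + ENNReal.ofReal K) ∂P := lintegral_mono_ae hptw
        _ = (∫⁻ ω in A n, ENNReal.ofReal ((1/D)^(k n)) * ENNReal.ofReal (conj Φ (ξ n ω / lam)) ∂P)
            + ENNReal.ofReal K * P (A n) := by
            rw [lintegral_add_right' _ aemeasurable_const, lintegral_const,
              Measure.restrict_apply_univ]
        _ = ENNReal.ofReal ((1/D)^(k n)) * (∫⁻ ω in A n, ENNReal.ofReal (conj Φ (ξ n ω / lam)) ∂P)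
            + ENNReal.ofReal K * P (A n) := by
            rw [lintegral_const_mul' _ _ ENNReal.ofReal_ne_top]
        _ ≤ ENNReal.ofReal ((1/D)^(k n)) * 1 + ENNReal.ofReal K * P (A n) := by
            refine add_le_add (mul_le_mul_right (α := ℝ≥0∞) ?_ _) le_rfl
            exact le_trans (setLIntegral_le_lintegral _ _) (hnorm n)
        _ = ENNReal.ofReal ((1/D)^(k n)) + ENNReal.ofReal K * P (A n) := by rw [mul_one]
    have hsum1 : Summable (fun n : ℕ => (1/D) ^ (k n)) := by
      have hble : ∀ n, (1/D) ^ (k n) ≤ D ^ m₀ * (1/D) ^ (Nat.log b (n+1)) := by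
        intro n
        have hlogle : Nat.log b (n+1) ≤ k n + m₀ := by
          rw [hkdef]; simp only []; omega
        have h1 : ((1:ℝ)/D) ^ (k n + m₀) ≤ (1/D) ^ (Nat.log b (n+1)) :=
          pow_le_pow_of_le_one (by positivity) (by rw [div_le_one hD0]; exact hD1.le) hlogle
        have h3 : (0:ℝ) < D ^ m₀ := by positivity
        calc ((1:ℝ)/D) ^ (k n) = ((1/D)^(k n) * (1/D)^m₀) * D^m₀ := by
              have hcan : ((1:ℝ)/D)^m₀ * D^m₀ = 1 := by
                rw [one_div, inv_pow, inv_mul_cancel₀ (ne_of_gt h3)]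
              rw [mul_assoc, hcan, mul_one]
          _ = D ^ m₀ * ((1/D) ^ (k n + m₀)) := by rw [pow_add]; ring
          _ ≤ D ^ m₀ * (1/D) ^ (Nat.log b (n+1)) := mul_le_mul_of_nonneg_left h1 h3.le
      exact Summable.of_nonneg_of_le (fun n => by positivity) hble
        ((summable_logpow hb2 hbD).mul_left _)
    rw [hsplit, hcompl, add_zero, hUdef, lintegral_iUnion hAmeas hdisj]
    calc ∑' n, ∫⁻ ω in A n, f ω ∂P
        ≤ ∑' n, (ENNReal.ofReal ((1/D) ^ (k n)) + ENNReal.ofReal K * P (A n)) :=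
          ENNReal.tsum_le_tsum hpiece
      _ = (∑' n, ENNReal.ofReal ((1/D) ^ (k n))) + ∑' n, ENNReal.ofReal K * P (A n) :=
          ENNReal.tsum_add
      _ < ⊤ := by
          refine ENNReal.add_lt_top.mpr ⟨?_, ?_⟩
          · rw [← ENNReal.ofReal_tsum_of_nonneg (fun n => by positivity) hsum1]
            exact ENNReal.ofReal_lt_top
          · rw [ENNReal.tsum_mul_left]
            refine ENNReal.mul_lt_top ENNReal.ofReal_lt_top ?_
            rw [← measure_iUnion hdisj hAmeas]
            exact lt_of_le_of_lt prob_le_one ENNReal.one_lt_top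
  have hdom0 : ∀ ω, (∀ m, ω ∉ A m → ξ m ω = 0) → ∀ N, |cesaro ξ N ω| ≤ g 0 ω := by
    intro ω hgood N
    refine hdom ω hgood 0 N ?_
    rw [pow_zero]
    have : (0:ℝ) ≤ (N:ℝ) := Nat.cast_nonneg N
    linarith
  constructor
  · constructor
    · exact hE.mono fun ω hgood => ⟨g 0 ω, by rintro v ⟨N, rfl⟩; exact hdom0 ω hgood N⟩
    · refine ⟨Measurable.iSup fun N => (hcmeas N).abs, lam⁻¹, inv_pos.mpr hlam0, ?_⟩
      refine lt_of_le_of_lt (lintegral_mono_ae (hE.mono fun ω hgood => ?_))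
        (hgint 0 lam hlam0 (by rw [pow_zero, mul_one]))
      refine ENNReal.ofReal_le_ofReal (conj_mono_abs hΦ ?_)
      set G : ℝ := ⨆ N, |cesaro ξ N ω| with hGdef
      have hG0 : 0 ≤ G := Real.iSup_nonneg fun N => abs_nonneg _
      have hGle : G ≤ g 0 ω := ciSup_le fun N => hdom0 ω hgood N
      have e1 : |lam⁻¹ * G| = G / lam := by
        rw [abs_mul, abs_inv, abs_of_pos hlam0, abs_of_nonneg hG0, inv_mul_eq_div]
      have e2 : |g 0 ω / lam| = g 0 ω / lam := by
        rw [abs_div, abs_of_pos hlam0, abs_of_nonneg (hg0 0 ω)]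
      rw [e1, e2, div_le_div_iff_of_pos_right hlam0]
      exact hGle
  · have hnn : ∀ N, 0 ≤ luxNorm P (conj Φ) (cesaro ξ N) := fun N =>
      Real.sInf_nonneg fun x hx => hx.1.le
    have key : ∀ ε : ℝ, 0 < ε → ∀ᶠ N in atTop, luxNorm P (conj Φ) (cesaro ξ N) ≤ ε := by
      intro ε hε
      obtain ⟨m₀, hm₀⟩ := pow_unbounded_of_one_lt (lam / ε) hbR1
      have hεm : lam ≤ ε * (b:ℝ) ^ m₀ := by
        rw [div_lt_iff₀ hε] at hm₀
        nlinarith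
      set N₀ : ℕ := b ^ m₀ with hN₀def
      have hN₀cast : ((b:ℝ)) ^ m₀ = ((N₀ : ℕ) : ℝ) := by rw [hN₀def]; push_cast; ring
      set F : ℕ → Ω → ℝ≥0∞ :=
        fun j ω => ENNReal.ofReal (conj Φ (cesaro ξ (N₀ + j) ω / ε)) with hFdef
      have hFmeas : ∀ j, Measurable (F j) := fun j =>
        (conj_comp_measurable hΦ ((hcmeas (N₀ + j)).div_const ε)).ennreal_ofReal
      have hFbound : ∀ j, F j ≤ᵐ[P] fun ω => ENNReal.ofReal (conj Φ (g m₀ ω / ε)) := by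
        intro j
        refine hE.mono fun ω hgood => ?_
        refine ENNReal.ofReal_le_ofReal (conj_mono_abs hΦ ?_)
        have hNc : (b:ℝ) ^ m₀ ≤ ((N₀ + j : ℕ):ℝ) + 1 := by
          rw [hN₀cast]
          push_cast
          have : (0:ℝ) ≤ (j:ℝ) := Nat.cast_nonneg j
          linarith
        have hd := hdom ω hgood m₀ (N₀ + j) hNc
        have e2 : |g m₀ ω / ε| = g m₀ ω / ε := by
          rw [abs_div, abs_of_pos hε, abs_of_nonneg (hg0 m₀ ω)]
        rw [abs_div, abs_of_pos hε, e2, div_le_div_iff_of_pos_right hε]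
        exact hd
      have hFlim : ∀ᵐ ω ∂P, Tendsto (fun j => F j ω) atTop (𝓝 0) := by
        refine hE.mono fun ω hgood => ?_
        by_cases h : ∃ n, ω ∈ A n
        · obtain ⟨n, hn⟩ := h
          set c : ℝ := conj Φ (ξ n ω / (ε * ((n:ℝ) + 1))) with hcdef
          have hub : ∀ᶠ j in atTop, conj Φ (cesaro ξ (N₀ + j) ω / ε)
              ≤ (((n:ℝ) + 1) * c) / (((N₀ + j : ℕ):ℝ) + 1) := by
            refine eventually_atTop.2 ⟨n, fun j hj => ?_⟩
            have hnle : n ≤ N₀ + j := le_trans hj (Nat.le_add_left j N₀)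
            rw [hces ω hgood n hn (N₀ + j), if_pos hnle]
            have hNj0 : (0:ℝ) < ((N₀ + j : ℕ):ℝ) + 1 := by positivity
            have harg : ξ n ω / (((N₀ + j : ℕ):ℝ) + 1) / ε
                = ((((n:ℝ) + 1)) / (((N₀ + j : ℕ):ℝ) + 1)) * (ξ n ω / (ε * ((n:ℝ) + 1))) := by
              field_simp
            rw [harg]
            have ht0 : 0 ≤ ((n:ℝ) + 1) / (((N₀ + j : ℕ):ℝ) + 1) := by positivity
            have ht1 : ((n:ℝ) + 1) / (((N₀ + j : ℕ):ℝ) + 1) ≤ 1 := by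
              rw [div_le_one hNj0]
              have : (n:ℝ) ≤ ((N₀ + j : ℕ):ℝ) := by exact_mod_cast hnle
              linarith
            refine (conj_smul_le hΦ ht0 ht1 _).trans (le_of_eq ?_)
            rw [hcdef]
            ring
          have hlb : ∀ j, (0:ℝ) ≤ conj Φ (cesaro ξ (N₀ + j) ω / ε) :=
            fun j => conj_nonneg hΦ _
          have htend : Tendsto (fun j : ℕ => (((n:ℝ) + 1) * c) / (((N₀ + j : ℕ):ℝ) + 1))
              atTop (𝓝 0) := by
            have h1 : Tendsto (fun m : ℕ => (((n:ℝ) + 1) * c) / ((m:ℝ) + 1)) atTop (𝓝 0) := by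
              have h2 := tendsto_one_div_add_atTop_nhds_zero_nat.const_mul (((n:ℝ) + 1) * c)
              simpa [mul_one_div, div_eq_mul_inv] using h2
            have hcomp := h1.comp (tendsto_add_atTop_nat N₀)
            refine hcomp.congr fun j => ?_
            simp only [Function.comp_apply]
            rw [Nat.add_comm]
          have hreal : Tendsto (fun j => conj Φ (cesaro ξ (N₀ + j) ω / ε)) atTop (𝓝 0) :=
            squeeze_zero' (Eventually.of_forall hlb) hub htend
          have hfin := ENNReal.tendsto_ofReal hreal
          rw [ENNReal.ofReal_zero] at hfin
          exact hfin
        · push_neg at h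
          have hz : ∀ j, F j ω = 0 := by
            intro j
            rw [hFdef]
            simp only []
            rw [hces0 ω hgood (fun hω => (Set.mem_iUnion.1 hω).elim fun m hm => h m hm) (N₀ + j),
              zero_div, conj_zero hΦ, ENNReal.ofReal_zero]
          simp only [hz]
          exact tendsto_const_nhds
      have hDCT := tendsto_lintegral_of_dominated_convergence _ hFmeas hFbound
        (hgint m₀ ε hε hεm).ne hFlim
      rw [lintegral_zero] at hDCT
      have hev : ∀ᶠ j in atTop, ∫⁻ ω, F j ω ∂P < 1 :=
        hDCT.eventually_lt_const zero_lt_one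
      obtain ⟨i, hi⟩ := eventually_atTop.1 hev
      refine eventually_atTop.2 ⟨N₀ + i, fun N hN => ?_⟩
      have hFi := hi (N - N₀) (by omega)
      have hNe : N₀ + (N - N₀) = N := by omega
      rw [hFdef] at hFi
      simp only [] at hFi
      rw [hNe] at hFi
      rw [luxNorm]
      exact csInf_le ⟨0, fun x hx => hx.1.le⟩ ⟨hε, le_of_lt hFi⟩
    refine tendsto_order.2 ⟨fun a ha => Eventually.of_forall fun N =>
      lt_of_lt_of_le ha (hnn N), fun a ha => ?_⟩
    exact (key (a / 2) (by linarith)).mono fun N hN => lt_of_le_of_lt hN (by linarith)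


end OrliczPaper
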